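/- A curve rational in polar coordinates cannot have a limit point different from the origin: let a < b ≤ +∞ with the interval (a,b) contained in Ω, and suppose that as t → b⁻ the function θ(t) tends to +∞ or to −∞, while P(t) = (r(t)·cos(θ(t)), r(t)·sin(θ(t))) converges to a point Q ∈ ℝ². Then Q = (0,0). -/

import Mathlib

/-!
Since `θ` is continuous on `(a, b)` and tends to `±∞` at `b`, the intermediate value theorem
makes `θ(t)` pass through every zero of `cos` and of `sin` arbitrarily close to `b`. At such
times one coordinate of `P(t) = (r cos θ, r sin θ)` vanishes, so each coordinate of the limit
`Q` is a limit of zeros.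
-/

open Filter

/-- The rational function defined by a pair of polynomials, e.g. r(t) = A(t)/B(t). -/
noncomputable def ratFun (A B : Polynomial ℝ) (t : ℝ) : ℝ :=
  A.eval t / B.eval t

/-- The curve in Cartesian coordinates: P(t) = (r(t)·cos(θ(t)), r(t)·sin(θ(t))). -/
noncomputable def polarCurve (A B C D : Polynomial ℝ) (t : ℝ) : ℝ × ℝ :=
  (ratFun A B t * Real.cos (ratFun C D t), ratFun A B t * Real.sin (ratFun C D t))

/-- The filter of real numbers tending to b from the left, where b ∈ ℝ ∪ {±∞} is
modelled as an extended real; for b = ⊤ this is `atTop`. -/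
noncomputable def leftLimitFilter (b : EReal) : Filter ℝ :=
  Filter.comap (fun x : ℝ => (x : EReal)) (nhdsWithin b (Set.Iio b))

open Set Function

theorem Function.Periodic.not_bddAbove_preimage_singleton {α : Type*} {f : ℝ → α} {c : ℝ}
    (hf : Periodic f c) (hc : 0 < c) (x : ℝ) : ¬BddAbove (f ⁻¹' {f x}) := by
  rintro ⟨M, hM⟩
  obtain ⟨n, hn⟩ := exists_nat_gt ((M - x) / c)
  have hmem : x + n * c ∈ f ⁻¹' {f x} := (hf.nat_mul n) x
  have hle := hM hmem
  rw [div_lt_iff₀ hc] at hn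
  linarith

theorem Function.Periodic.not_bddBelow_preimage_singleton {α : Type*} {f : ℝ → α} {c : ℝ}
    (hf : Periodic f c) (hc : 0 < c) (x : ℝ) : ¬BddBelow (f ⁻¹' {f x}) := by
  rintro ⟨M, hM⟩
  obtain ⟨n, hn⟩ := exists_nat_gt ((x - M) / c)
  have hmem : x - n * c ∈ f ⁻¹' {f x} := hf.sub_nat_mul_eq n
  have hle := hM hmem
  rw [div_lt_iff₀ hc] at hn
  linarith

section IntermediateValue

variable {ι : Sort*} {l : Filter ℝ} [l.NeBot] {p : ι → Prop} {s : ι → Set ℝ} {θ : ℝ → ℝ}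
  {Z : Set ℝ}

theorem frequently_mem_of_tendsto_atTop (hl : l.HasBasis p s)
    (hs : ∀ i, p i → IsPreconnected (s i)) (hθ : ∀ i, p i → ContinuousOn θ (s i))
    (hlim : Tendsto θ l atTop) (hZ : ¬BddAbove Z) : ∃ᶠ t in l, θ t ∈ Z := by
  rw [hl.frequently_iff]
  intro i hi
  have hsi : s i ∈ l := hl.mem_of_mem hi
  obtain ⟨t₁, ht₁⟩ := Filter.nonempty_of_mem hsi
  obtain ⟨z, hzZ, hz⟩ := not_bddAbove_iff.mp hZ (θ t₁)
  obtain ⟨t₂, hθt₂, ht₂⟩ := ((hlim.eventually_ge_atTop z).and hsi).exists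
  have himage : (θ '' s i).OrdConnected := ((hs i hi).image θ (hθ i hi)).ordConnected
  obtain ⟨t, ht, rfl⟩ := himage.out (mem_image_of_mem θ ht₁) (mem_image_of_mem θ ht₂)
    ⟨hz.le, hθt₂⟩
  exact ⟨t, ht, hzZ⟩

theorem frequently_mem_of_tendsto_atBot (hl : l.HasBasis p s)
    (hs : ∀ i, p i → IsPreconnected (s i)) (hθ : ∀ i, p i → ContinuousOn θ (s i))
    (hlim : Tendsto θ l atBot) (hZ : ¬BddBelow Z) : ∃ᶠ t in l, θ t ∈ Z := by
  have hneg : ∃ᶠ t in l, -θ t ∈ -Z :=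
    frequently_mem_of_tendsto_atTop hl hs (fun i hi => (hθ i hi).neg)
      (tendsto_neg_atBot_atTop.comp hlim) (mt bddAbove_neg.mp hZ)
  simpa only [Set.neg_mem_neg] using hneg

end IntermediateValue

theorem eq_zero_of_tendsto_mul_of_frequently_eq_zero {α : Type*} {l : Filter α} {r g : α → ℝ}
    {q : ℝ} (hlim : Tendsto (fun t => r t * g t) l (nhds q)) (hg : ∃ᶠ t in l, g t = 0) :
    q = 0 :=
  tendsto_nhds_unique_of_frequently_eq hlim tendsto_const_nhds
    (hg.mono fun t ht => by rw [ht, mul_zero])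

theorem continuousOn_ratFun (A B : Polynomial ℝ) :
    ContinuousOn (ratFun A B) {t | B.eval t ≠ 0} :=
  A.continuous.continuousOn.div B.continuous.continuousOn fun _ ht => ht

theorem leftLimitFilter_hasBasis {a : ℝ} {b : EReal} (hab : (a : EReal) < b) :
    (leftLimitFilter b).HasBasis (fun c : EReal => c < b ∧ (a : EReal) ≤ c)
      (fun c => (↑) ⁻¹' Ioo c b) := by
  refine ((nhdsLT_basis_of_exists_lt ⟨_, hab⟩).restrict fun c hc => ?_).comap _
  exact ⟨max c a, max_lt hc hab, le_max_right _ _, Ioo_subset_Ioo_left (le_max_left _ _)⟩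

theorem leftLimitFilter_neBot {a : ℝ} {b : EReal} (hab : (a : EReal) < b) :
    (leftLimitFilter b).NeBot := by
  refine (leftLimitFilter_hasBasis hab).neBot_iff.mpr fun {c} hc => ?_
  obtain ⟨t, hct, htb⟩ := EReal.exists_between_coe_real hc.1
  exact ⟨t, hct, htb⟩

theorem isPreconnected_preimage_coe_Ioo (c b : EReal) :
    IsPreconnected ((↑) ⁻¹' Ioo c b : Set ℝ) :=
  (ordConnected_Ioo.preimage_mono EReal.coe_strictMono.monotone).isPreconnected

theorem limit_point_is_origin
    (A B C D : Polynomial ℝ)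
    (a : ℝ) (b : EReal) (hab : (a : EReal) < b)
    (hsub : ∀ t : ℝ, a < t → (t : EReal) < b → B.eval t ≠ 0 ∧ D.eval t ≠ 0)
    (hθ : Tendsto (ratFun C D) (leftLimitFilter b) atTop ∨
          Tendsto (ratFun C D) (leftLimitFilter b) atBot)
    (Q : ℝ × ℝ)
    (hP : Tendsto (polarCurve A B C D) (leftLimitFilter b) (nhds Q)) :
    Q = (0, 0) := by
  have := leftLimitFilter_neBot hab
  have hbasis := leftLimitFilter_hasBasis hab
  have hcont : ∀ c : EReal, c < b ∧ (a : EReal) ≤ c →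
      ContinuousOn (ratFun C D) ((↑) ⁻¹' Ioo c b) := fun c hc =>
    (continuousOn_ratFun C D).mono fun t ht =>
      (hsub t (EReal.coe_lt_coe_iff.mp (hc.2.trans_lt ht.1)) ht.2).2
  have hzeros : ∀ {g : ℝ → ℝ}, Periodic g (2 * Real.pi) → ∀ x, g x = 0 →
      ∃ᶠ t in leftLimitFilter b, g (ratFun C D t) = 0 := by
    intro g hg x hx
    have hpos : 0 < 2 * Real.pi := by positivity
    rw [← hx]
    exact hθ.elim
      (frequently_mem_of_tendsto_atTop hbasis (fun _ _ => isPreconnected_preimage_coe_Ioo _ _)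
        hcont · (hg.not_bddAbove_preimage_singleton hpos x))
      (frequently_mem_of_tendsto_atBot hbasis (fun _ _ => isPreconnected_preimage_coe_Ioo _ _)
        hcont · (hg.not_bddBelow_preimage_singleton hpos x))
  have hQ₁ : Q.1 = 0 := eq_zero_of_tendsto_mul_of_frequently_eq_zero
    ((continuous_fst.tendsto Q).comp hP) (hzeros Real.cos_periodic _ Real.cos_pi_div_two)
  have hQ₂ : Q.2 = 0 := eq_zero_of_tendsto_mul_of_frequently_eq_zero
    ((continuous_snd.tendsto Q).comp hP) (hzeros Real.sin_periodic _ Real.sin_zero)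
  exact Prod.ext hQ₁ hQ₂
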